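/- Let Δ be a simplicial complex and α ∈ Δ a face whose link link_α Δ is collapsible. Then Δ collapses onto the deletion del_α Δ = {ν ∈ Δ : α ⊄ ν}. -/
import Mathlib


variable {V : Type*} [DecidableEq V]

/-- A (downward closed) abstract simplicial complex on `V`, as a set of finsets. -/
def IsCx (Δ : Set (Finset V)) : Prop :=
  ∀ ⦃s t : Finset V⦄, s ∈ Δ → t ⊆ s → t ∈ Δ

/-- `τ` is a facet of `Δ`: a face maximal under inclusion. -/
def IsFacet (Δ : Set (Finset V)) (τ : Finset V) : Prop :=
  τ ∈ Δ ∧ ∀ s ∈ Δ, τ ⊆ s → s = τ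

/-- `(σ, τ)` is a free pair: `τ` is a facet, `σ ⊊ τ`, and `τ` is the only facet
containing `σ`. -/
def FreePair (Δ : Set (Finset V)) (σ τ : Finset V) : Prop :=
  IsFacet Δ τ ∧ σ ⊂ τ ∧ ∀ τ', IsFacet Δ τ' → σ ⊆ τ' → τ' = τ

/-- One elementary collapse: remove all faces containing the free face `σ`. -/
def CollapseStep (Δ Δ' : Set (Finset V)) : Prop :=
  ∃ σ τ, FreePair Δ σ τ ∧ Δ' = {ν ∈ Δ | ¬ σ ⊆ ν}

/-- `Δ` collapses onto `Δ'` by a finite sequence of elementary collapses. -/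
def Collapses (Δ Δ' : Set (Finset V)) : Prop :=
  Relation.ReflTransGen CollapseStep Δ Δ'

/-- `Δ` is collapsible: it collapses onto the void complex (no faces at all). -/
def Collapsible (Δ : Set (Finset V)) : Prop :=
  Collapses Δ (∅ : Set (Finset V))

/-- The link of a face `α` in `Δ`. -/
def link (Δ : Set (Finset V)) (α : Finset V) : Set (Finset V) :=
  {ν ∈ Δ | ν ∩ α = ∅ ∧ ν ∪ α ∈ Δ}

/-- The deletion together with the cone over `S`. -/
def Dlift (Δ : Set (Finset V)) (α : Finset V) (S : Set (Finset V)) : Set (Finset V) :=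
  {ν ∈ Δ | ¬ α ⊆ ν} ∪ (fun μ => μ ∪ α) '' S

lemma union_subset_union_iff_of_disjoint {σ μ α : Finset V}
    (hσ : Disjoint σ α) : σ ∪ α ⊆ μ ∪ α ↔ σ ⊆ μ := by
  constructor
  · intro h x hx
    rcases Finset.mem_union.mp (h (Finset.mem_union_left _ hx)) with h' | h'
    · exact h'
    · exact absurd h' (Finset.disjoint_left.mp hσ hx)
  · intro h
    exact Finset.union_subset_union_left h

lemma step_lift (Δ : Set (Finset V)) (α : Finset V) {S S' : Set (Finset V)}
    (hdis : ∀ μ ∈ S, μ ∩ α = ∅) (h : CollapseStep S S') :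
    CollapseStep (Dlift Δ α S) (Dlift Δ α S') := by
  obtain ⟨σ, τ, ⟨⟨hτS, hτmax⟩, hστ, huniq⟩, rfl⟩ := h
  have hτdis : Disjoint τ α := Finset.disjoint_iff_inter_eq_empty.mpr (hdis τ hτS)
  have hσdis : Disjoint σ α := hτdis.mono_left hστ.subset
  -- a facet of the lift containing α comes from a facet of S
  have hmem_cases : ∀ s ∈ Dlift Δ α S, α ⊆ s → ∃ μ ∈ S, Disjoint μ α ∧ s = μ ∪ α := by
    rintro s (⟨_, hs2⟩ | ⟨μ, hμS, rfl⟩) hαs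
    · exact absurd hαs hs2
    · exact ⟨μ, hμS, Finset.disjoint_iff_inter_eq_empty.mpr (hdis μ hμS), rfl⟩
  have hfacet : IsFacet (Dlift Δ α S) (τ ∪ α) := by
    refine ⟨Or.inr ⟨τ, hτS, rfl⟩, ?_⟩
    intro s hs hsub
    obtain ⟨μ, hμS, hμdis, rfl⟩ := hmem_cases s hs
      ((Finset.subset_union_right).trans hsub)
    have : τ ⊆ μ := by
      intro x hx
      rcases Finset.mem_union.mp (hsub (Finset.mem_union_left _ hx)) with h' | h'
      · exact h'
      · exact absurd h' (Finset.disjoint_left.mp hτdis hx)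
    rw [hτmax μ hμS this]
  refine ⟨σ ∪ α, τ ∪ α, ⟨hfacet, ?_, ?_⟩, ?_⟩
  · -- σ ∪ α ⊂ τ ∪ α
    obtain ⟨x, hxτ, hxσ⟩ := Finset.exists_of_ssubset hστ
    refine Finset.ssubset_iff_of_subset (Finset.union_subset_union_left hστ.subset)
      |>.mpr ⟨x, Finset.mem_union_left _ hxτ, ?_⟩
    intro hx
    rcases Finset.mem_union.mp hx with h' | h'
    · exact hxσ h'
    · exact Finset.disjoint_left.mp hτdis hxτ h'
  · -- uniqueness
    rintro τ' ⟨hτ'mem, hτ'max⟩ hsub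
    obtain ⟨μ, hμS, hμdis, rfl⟩ := hmem_cases τ' hτ'mem
      ((Finset.subset_union_right).trans hsub)
    have hμfacet : IsFacet S μ := by
      refine ⟨hμS, fun ρ hρS hμρ => ?_⟩
      have hρdis : Disjoint ρ α := Finset.disjoint_iff_inter_eq_empty.mpr (hdis ρ hρS)
      have := hτ'max (ρ ∪ α) (Or.inr ⟨ρ, hρS, rfl⟩) (Finset.union_subset_union_left hμρ)
      have : ρ ⊆ μ := (union_subset_union_iff_of_disjoint hρdis).mp this.le
      exact Finset.Subset.antisymm this hμρ
    have hσμ : σ ⊆ μ := (union_subset_union_iff_of_disjoint hσdis).mp hsub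
    rw [huniq μ hμfacet hσμ]
  · -- set equality
    ext ν
    constructor
    · rintro (⟨hν1, hν2⟩ | ⟨μ, ⟨hμS, hσμ⟩, rfl⟩)
      · exact ⟨Or.inl ⟨hν1, hν2⟩, fun h =>
          hν2 ((Finset.subset_union_right).trans h)⟩
      · have hμdis : Disjoint μ α := Finset.disjoint_iff_inter_eq_empty.mpr (hdis μ hμS)
        exact ⟨Or.inr ⟨μ, hμS, rfl⟩, fun h =>
          hσμ ((union_subset_union_iff_of_disjoint hσdis).mp h)⟩
    · rintro ⟨hν, hσν⟩
      rcases hν with ⟨hν1, hν2⟩ | ⟨μ, hμS, rfl⟩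
      · exact Or.inl ⟨hν1, hν2⟩
      · exact Or.inr ⟨μ, ⟨hμS, fun h => hσν
          ((union_subset_union_iff_of_disjoint hσdis).mpr h)⟩, rfl⟩

/-- If the link of a face `α ∈ Δ` is collapsible, then `Δ` collapses onto the
deletion `del_α Δ = {ν ∈ Δ : α ⊄ ν}`. -/
theorem collapses_del_of_collapsible_link (Δ : Set (Finset V)) (hΔ : IsCx Δ)
    (α : Finset V) (hα : α ∈ Δ) (hlink : Collapsible (link Δ α)) :
    Collapses Δ {ν ∈ Δ | ¬ α ⊆ ν} := by
  have key : ∀ S : Set (Finset V), Collapses S ∅ → (∀ μ ∈ S, μ ∩ α = ∅) →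
      Collapses (Dlift Δ α S) (Dlift Δ α ∅) := by
    intro S hS
    induction hS using Relation.ReflTransGen.head_induction_on with
    | refl => intro _; exact Relation.ReflTransGen.refl
    | head hstep _ ih =>
      intro hdis
      obtain ⟨σ, τ, hfp, hEq⟩ := hstep
      refine Relation.ReflTransGen.head (step_lift Δ α hdis ⟨σ, τ, hfp, hEq⟩) (ih ?_)
      intro μ hμ
      rw [hEq] at hμ
      exact hdis μ hμ.1
  have h1 : Dlift Δ α (link Δ α) = Δ := by
    ext ν
    constructor
    · rintro (⟨hν1, _⟩ | ⟨μ, ⟨_, _, hμ3⟩, rfl⟩)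
      · exact hν1
      · exact hμ3
    · intro hν
      by_cases hαν : α ⊆ ν
      · refine Or.inr ⟨ν \ α, ⟨hΔ hν (Finset.sdiff_subset), ?_, ?_⟩, ?_⟩
        · exact Finset.sdiff_inter_self _ _
        · rwa [Finset.sdiff_union_of_subset hαν]
        · exact Finset.sdiff_union_of_subset hαν
      · exact Or.inl ⟨hν, hαν⟩
  have h2 : Dlift Δ α (∅ : Set (Finset V)) = {ν ∈ Δ | ¬ α ⊆ ν} := by
    simp [Dlift]
  have hdis0 : ∀ μ ∈ link Δ α, μ ∩ α = ∅ := fun μ hμ => hμ.2.1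
  have := key (link Δ α) hlink hdis0
  rwa [h1, h2] at this
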